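/- Let n ≥ 1 and let L : Matrix (Fin n) ℂ →ₗ[ℂ] Matrix (Fin n) ℂ be a linear map such that for every t ≥ 0 the map T_t = exp(t • L) is positive and trace-preserving. Then the following are equivalent: (1) T_t 1 = 1 for all t ≥ 0; (2) for every t ≥ 0 and every density matrix ρ, the eigenvalue vector of T_t ρ is majorized by that of ρ (for each k, the sum of the k largest eigenvalues of T_t ρ is at most the sum of the k largest eigenvalues of ρ); (3) S(T_t ρ) ≥ S(ρ) for every t ≥ 0 and every density matrix ρ, where S is the von Neumann entropy; (4) L 1 = 0. -/

import Mathlib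

/-!
For a positive trace-preserving map `Φ`, let `u_i` be eigenvectors of `Φ ρ` and `P_j` the spectral
projections of `ρ`. If `Φ` is moreover unital, the matrix `B i j = ⟪u_i, Φ (P_j) u_i⟫` is doubly
stochastic and carries the spectrum of `ρ` to that of `Φ ρ`. By Birkhoff's theorem `B` is a convex
combination of permutation matrices, so every convex permutation-invariant function of the spectrum
(the Ky Fan sums) can only decrease and every concave one (the entropy) can only increase.
Conversely, either inequality applied to the maximally mixed state `1 / n` forces `Φ (1 / n)` to
have a flat spectrum, so `Φ (1 / n) = 1 / n` and `Φ` is unital. Finally `exp (t • L) 1 = 1` for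
all `t ≥ 0` iff `L 1 = 0`, by differentiating `t ↦ exp (t • L) 1`.
-/

open scoped Matrix ComplexOrder

/-- A density matrix: positive semidefinite with unit trace. -/
def IsDensityMatrix {n : ℕ} (ρ : Matrix (Fin n) (Fin n) ℂ) : Prop :=
  ρ.PosSemidef ∧ ρ.trace = 1

/-- The (real) eigenvalues of a matrix, via its Hermitian spectral decomposition
(junk value `0` if the matrix is not Hermitian). -/
noncomputable def eigs {n : ℕ} (A : Matrix (Fin n) (Fin n) ℂ) : Fin n → ℝ :=
  if h : A.IsHermitian then h.eigenvalues else 0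

/-- A linear map on matrices is positive if it preserves positive semidefiniteness. -/
def IsPositiveMap {n : ℕ}
    (Φ : Matrix (Fin n) (Fin n) ℂ →ₗ[ℂ] Matrix (Fin n) (Fin n) ℂ) : Prop :=
  ∀ A : Matrix (Fin n) (Fin n) ℂ, A.PosSemidef → (Φ A).PosSemidef

/-- A linear map on matrices is trace-preserving if it preserves the trace. -/
def IsTracePreserving {n : ℕ}
    (Φ : Matrix (Fin n) (Fin n) ℂ →ₗ[ℂ] Matrix (Fin n) (Fin n) ℂ) : Prop :=
  ∀ A : Matrix (Fin n) (Fin n) ℂ, (Φ A).trace = A.trace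


/-- The von Neumann entropy `S(ρ) = -∑ λ_k log λ_k` (with `0 · log 0 = 0`). -/
noncomputable def vnEntropy {n : ℕ} (A : Matrix (Fin n) (Fin n) ℂ) : ℝ :=
  -∑ k, eigs A k * Real.log (eigs A k)


/-- The exponential of an endomorphism of the finite-dimensional space of matrices,
computed via the exponential of its matrix representation in the standard basis. -/
noncomputable def expEnd {n : ℕ}
    (L : Matrix (Fin n) (Fin n) ℂ →ₗ[ℂ] Matrix (Fin n) (Fin n) ℂ) :
    Matrix (Fin n) (Fin n) ℂ →ₗ[ℂ] Matrix (Fin n) (Fin n) ℂ :=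
  Matrix.toLin (Matrix.stdBasis ℂ (Fin n) (Fin n)) (Matrix.stdBasis ℂ (Fin n) (Fin n))
    (NormedSpace.exp
      (LinearMap.toMatrix (Matrix.stdBasis ℂ (Fin n) (Fin n))
        (Matrix.stdBasis ℂ (Fin n) (Fin n)) L))


/-- The sum of the `k` largest entries of a vector: the maximum over all `k`-element
index subsets `s` of `∑ i ∈ s, v i`. -/
noncomputable def kMaxSum {n : ℕ} (v : Fin n → ℝ) (k : ℕ) : ℝ :=
  ⨆ s : {s : Finset (Fin n) // s.card = k}, ∑ i ∈ s.1, v i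

open Matrix

theorem exp_smul_mul_eq_self_iff {𝔸 : Type*} [NormedRing 𝔸] [NormedAlgebra ℝ 𝔸] [CompleteSpace 𝔸]
    (a x : 𝔸) : (∀ t : ℝ, 0 ≤ t → NormedSpace.exp (t • a) * x = x) ↔ a * x = 0 := by
  constructor
  · intro hfix
    have hderiv : HasDerivAt (fun u : ℝ => NormedSpace.exp (u • a) * x)
        (a * (NormedSpace.exp ((1 : ℝ) • a) * x)) 1 := by
      simpa only [mul_assoc] using (hasDerivAt_exp_smul_const' a (1 : ℝ)).mul_const x
    have hconst : (fun u : ℝ => NormedSpace.exp (u • a) * x) =ᶠ[nhds 1] fun _ => x := by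
      filter_upwards [Ioi_mem_nhds one_pos] with u hu using hfix u hu.le
    have := hderiv.unique (hconst.hasDerivAt_iff.mpr (hasDerivAt_const 1 x))
    rwa [hfix 1 zero_le_one] at this
  · intro hax t _
    have hderiv (s : ℝ) : HasDerivAt (fun u : ℝ => NormedSpace.exp (u • a) * x) 0 s := by
      simpa only [mul_assoc, hax, mul_zero] using (hasDerivAt_exp_smul_const a s).mul_const x
    simpa using is_const_of_deriv_eq_zero (fun s => (hderiv s).differentiableAt)
      (fun s => (hderiv s).deriv) t 0

theorem Matrix.exp_smul_mulVec_eq_self_iff {ι 𝕜 : Type*} [Fintype ι] [DecidableEq ι] [RCLike 𝕜]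
    (A : Matrix ι ι 𝕜) (x : ι → 𝕜) :
    (∀ t : ℝ, 0 ≤ t → NormedSpace.exp (t • A) *ᵥ x = x) ↔ A *ᵥ x = 0 := by
  cases isEmpty_or_nonempty ι
  · simp [Subsingleton.elim _ x]
  open scoped Matrix.Norms.Operator in
  have h := exp_smul_mul_eq_self_iff A (replicateCol ι x)
  simp only [← replicateCol_mulVec, replicateCol_inj, ← replicateCol_zero (ι := ι)] at h
  -- `h` carries the operator-norm instances, which agree with the default ones only up to unfolding
  exact h

theorem LinearMap.apply_eq_iff_toMatrix_mulVec_repr {ι R M : Type*} [Fintype ι] [DecidableEq ι]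
    [CommRing R] [AddCommGroup M] [Module R M] (b : Module.Basis ι R M) (f : M →ₗ[R] M)
    (x y : M) : f x = y ↔ LinearMap.toMatrix b b f *ᵥ b.repr x = b.repr y := by
  rw [LinearMap.toMatrix_mulVec_repr, DFunLike.coe_fn_eq, b.repr.injective.eq_iff]

theorem LinearMap.toMatrix_expEnd_smul {n : ℕ}
    (L : Matrix (Fin n) (Fin n) ℂ →ₗ[ℂ] Matrix (Fin n) (Fin n) ℂ) (t : ℝ) :
    LinearMap.toMatrix (stdBasis ℂ (Fin n) (Fin n)) (stdBasis ℂ (Fin n) (Fin n)) (expEnd (t • L)) =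
      NormedSpace.exp
        (t • LinearMap.toMatrix (stdBasis ℂ (Fin n) (Fin n)) (stdBasis ℂ (Fin n) (Fin n)) L) := by
  rw [expEnd, LinearMap.toMatrix_toLin]
  rfl

theorem expEnd_smul_apply_eq_self_iff {n : ℕ}
    (L : Matrix (Fin n) (Fin n) ℂ →ₗ[ℂ] Matrix (Fin n) (Fin n) ℂ) (X : Matrix (Fin n) (Fin n) ℂ) :
    (∀ t : ℝ, 0 ≤ t → expEnd (t • L) X = X) ↔ L X = 0 := by
  simp only [LinearMap.apply_eq_iff_toMatrix_mulVec_repr (stdBasis ℂ (Fin n) (Fin n)),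
    LinearMap.toMatrix_expEnd_smul, map_zero, Finsupp.coe_zero]
  exact Matrix.exp_smul_mulVec_eq_self_iff _ _

theorem ConvexOn.map_mulVec_le_of_mem_doublyStochastic {ι : Type*} [Fintype ι] [DecidableEq ι]
    {s : Set (ι → ℝ)} {f : (ι → ℝ) → ℝ} (hf : ConvexOn ℝ s f) {v : ι → ℝ}
    (hperm : ∀ σ : Equiv.Perm ι, v ∘ σ ∈ s ∧ f (v ∘ σ) ≤ f v)
    {B : Matrix ι ι ℝ} (hB : B ∈ doublyStochastic ℝ ι) : f (B *ᵥ v) ≤ f v := by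
  rw [← SetLike.mem_coe, doublyStochastic_eq_convexHull_permMatrix] at hB
  have hperm_mem : {σ.permMatrix ℝ | σ : Equiv.Perm ι} ⊆ (mulVecBilin ℝ ℝ).flip v ⁻¹' s := by
    rintro _ ⟨σ, rfl⟩
    simpa [permMatrix_mulVec] using (hperm σ).1
  obtain ⟨_, ⟨σ, rfl⟩, hσ⟩ :=
    (hf.comp_linearMap ((mulVecBilin ℝ ℝ).flip v)).exists_ge_of_mem_convexHull hperm_mem hB
  simp only [Function.comp_apply, LinearMap.flip_apply, mulVecBilin_apply, permMatrix_mulVec] at hσ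
  exact hσ.trans (hperm σ).2

theorem kMaxSum_comp_perm {n : ℕ} (v : Fin n → ℝ) (σ : Equiv.Perm (Fin n)) (k : ℕ) :
    kMaxSum (v ∘ σ) k = kMaxSum v k := by
  let e : {s : Finset (Fin n) // s.card = k} ≃ {s : Finset (Fin n) // s.card = k} :=
    σ.finsetCongr.subtypeEquiv fun s => by simp
  refine e.iSup_congr fun s => ?_
  simp [e, Finset.sum_map]

theorem convexOn_kMaxSum {n : ℕ} (k : ℕ) :
    ConvexOn ℝ Set.univ fun v : Fin n → ℝ => kMaxSum v k := by
  refine ⟨convex_univ, fun x _ y _ a b ha hb hab => ?_⟩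
  cases isEmpty_or_nonempty {s : Finset (Fin n) // s.card = k}
  · simp [kMaxSum]
  refine ciSup_le fun s => ?_
  have hle (w : Fin n → ℝ) : ∑ i ∈ s.1, w i ≤ kMaxSum w k :=
    le_ciSup (f := fun s : {s : Finset (Fin n) // s.card = k} => ∑ i ∈ s.1, w i)
      (Set.finite_range _).bddAbove s
  simp only [Pi.add_apply, Pi.smul_apply, smul_eq_mul, Finset.sum_add_distrib, ← Finset.mul_sum]
  gcongr <;> exact hle _

theorem kMaxSum_mulVec_le {n : ℕ} {B : Matrix (Fin n) (Fin n) ℝ}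
    (hB : B ∈ doublyStochastic ℝ (Fin n)) (v : Fin n → ℝ) (k : ℕ) :
    kMaxSum (B *ᵥ v) k ≤ kMaxSum v k :=
  (convexOn_kMaxSum k).map_mulVec_le_of_mem_doublyStochastic
    (fun σ => ⟨Set.mem_univ _, (kMaxSum_comp_perm v σ k).le⟩) hB

theorem concaveOn_sum_negMulLog {ι : Type*} [Fintype ι] :
    ConcaveOn ℝ (Set.Ici 0) fun v : ι → ℝ => ∑ i, Real.negMulLog (v i) := by
  refine ⟨convex_Ici 0, fun x hx y hy a b ha hb hab => ?_⟩
  simp only [smul_eq_mul, Finset.mul_sum, ← Finset.sum_add_distrib]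
  exact Finset.sum_le_sum fun i _ => Real.concaveOn_negMulLog.2 (hx i) (hy i) ha hb hab

theorem sum_negMulLog_le_sum_negMulLog_mulVec {ι : Type*} [Fintype ι] [DecidableEq ι]
    {B : Matrix ι ι ℝ} (hB : B ∈ doublyStochastic ℝ ι) {v : ι → ℝ} (hv : 0 ≤ v) :
    ∑ i, Real.negMulLog (v i) ≤ ∑ i, Real.negMulLog ((B *ᵥ v) i) := by
  have hperm (σ : Equiv.Perm ι) : ∑ i, Real.negMulLog (v i) ≤ ∑ i, Real.negMulLog ((v ∘ σ) i) :=
    (Equiv.sum_comp σ fun i => Real.negMulLog (v i)).ge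
  simpa using concaveOn_sum_negMulLog.neg.map_mulVec_le_of_mem_doublyStochastic
    (fun σ => ⟨fun i => hv (σ i), neg_le_neg (hperm σ)⟩) hB

theorem eigs_of_isHermitian {n : ℕ} {A : Matrix (Fin n) (Fin n) ℂ} (hA : A.IsHermitian) :
    eigs A = hA.eigenvalues :=
  dif_pos hA

theorem Matrix.IsHermitian.eigenvalues_eq_const_iff {ι 𝕜 : Type*} [Fintype ι] [DecidableEq ι]
    [RCLike 𝕜] {A : Matrix ι ι 𝕜} (hA : A.IsHermitian) (c : ℝ) :
    hA.eigenvalues = Function.const ι c ↔ A = (c : 𝕜) • 1 := by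
  constructor
  · intro h
    rw [hA.spectral_theorem, h, Function.comp_const]
    change Unitary.conjStarAlgAut 𝕜 _ _ (diagonal fun _ => (c : 𝕜)) = _
    rw [← smul_one_eq_diagonal, map_smul, map_one]
  · intro h
    subst h
    ext i
    rw [hA.eigenvalues_eq i, smul_mulVec, one_mulVec, dotProduct_smul, dotProduct_comm,
      ← EuclideanSpace.inner_eq_star_dotProduct, inner_self_eq_norm_sq_to_K,
      hA.eigenvectorBasis.orthonormal.1 i]
    simp

theorem Matrix.trace_conjStarAlgAut {ι 𝕜 : Type*} [Fintype ι] [DecidableEq ι] [RCLike 𝕜]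
    (U : unitary (Matrix ι ι 𝕜)) (M : Matrix ι ι 𝕜) :
    (Unitary.conjStarAlgAut 𝕜 _ U M).trace = M.trace := by
  rw [Unitary.conjStarAlgAut_apply, trace_mul_cycle, Unitary.coe_star_mul_self, one_mul]

theorem Matrix.PosSemidef.conjStarAlgAut {ι 𝕜 : Type*} [Fintype ι] [DecidableEq ι] [RCLike 𝕜]
    {M : Matrix ι ι 𝕜} (hM : M.PosSemidef) (U : unitary (Matrix ι ι 𝕜)) :
    (Unitary.conjStarAlgAut 𝕜 _ U M).PosSemidef := by
  simpa [star_eq_conjTranspose] using hM.mul_mul_conjTranspose_same (U : Matrix ι ι 𝕜)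

theorem exists_mem_doublyStochastic_eigs_map_eq {n : ℕ}
    {Φ : Matrix (Fin n) (Fin n) ℂ →ₗ[ℂ] Matrix (Fin n) (Fin n) ℂ} (hpos : IsPositiveMap Φ)
    (htp : IsTracePreserving Φ) (hunital : Φ 1 = 1) {ρ : Matrix (Fin n) (Fin n) ℂ}
    (hρ : ρ.PosSemidef) : ∃ B ∈ doublyStochastic ℝ (Fin n), eigs (Φ ρ) = B *ᵥ eigs ρ := by
  have hσ := (hpos ρ hρ).isHermitian
  let conjU := Unitary.conjStarAlgAut ℂ (Matrix (Fin n) (Fin n) ℂ) (star hσ.eigenvectorUnitary)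
  let P (j : Fin n) :=
    Unitary.conjStarAlgAut ℂ _ hρ.isHermitian.eigenvectorUnitary (diagonal (Pi.single j 1))
  have hP_psd (j : Fin n) : (Φ (P j)).PosSemidef :=
    hpos _ ((PosSemidef.diagonal (Pi.single_nonneg.2 zero_le_one)).conjStarAlgAut _)
  have hP_sum : ∑ j, P j = 1 := by
    simp only [P, ← map_sum, diagonal_single, sum_single_one, map_one]
  have hρ_eq : ρ = ∑ j, (eigs ρ j : ℂ) • P j := by
    conv_lhs => rw [hρ.isHermitian.spectral_theorem]
    simp only [P, ← map_smul, ← map_sum, diagonal_single, smul_single, smul_eq_mul, mul_one,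
      sum_single_eq_diagonal, eigs_of_isHermitian hρ.isHermitian]
    rfl
  refine ⟨of fun i j => (conjU (Φ (P j)) i i).re,
    mem_doublyStochastic_iff_sum.2 ⟨?_, ?_, ?_⟩, ?_⟩
  · intro i j
    exact (Complex.nonneg_iff.1 ((hP_psd j).conjStarAlgAut _).diag_nonneg).1
  · intro i
    simp only [of_apply, ← Complex.re_sum, ← Matrix.sum_apply, ← map_sum, hP_sum, hunital,
      map_one, one_apply_eq, Complex.one_re]
  · intro j
    have htrace : (conjU (Φ (P j))).trace = 1 := by
      rw [trace_conjStarAlgAut, htp, trace_conjStarAlgAut, trace_diagonal, Finset.sum_pi_single']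
      simp
    simpa [trace, Complex.re_sum] using congrArg Complex.re htrace
  · ext i
    have hdiag : (conjU (Φ ρ) i i).re = hσ.eigenvalues i := by
      simp [conjU, hσ.conjStarAlgAut_star_eigenvectorUnitary]
    rw [eigs_of_isHermitian hσ, ← hdiag]
    conv_lhs => rw [hρ_eq]
    simp [mulVec, dotProduct, Matrix.sum_apply, Complex.re_sum, mul_comm, conjU]

theorem vnEntropy_eq_sum_negMulLog {n : ℕ} (A : Matrix (Fin n) (Fin n) ℂ) :
    vnEntropy A = ∑ i, Real.negMulLog (eigs A i) := by
  simp [vnEntropy, Real.negMulLog]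

theorem eigs_nonneg_of_posSemidef {n : ℕ} {A : Matrix (Fin n) (Fin n) ℂ} (hA : A.PosSemidef) :
    0 ≤ eigs A := by
  rw [eigs_of_isHermitian hA.isHermitian]
  exact hA.eigenvalues_nonneg

theorem IsDensityMatrix.sum_eigs {n : ℕ} {ρ : Matrix (Fin n) (Fin n) ℂ} (hρ : IsDensityMatrix ρ) :
    ∑ i, eigs ρ i = 1 := by
  obtain ⟨hpsd, htr⟩ := hρ
  have := hpsd.isHermitian.trace_eq_sum_eigenvalues
  rw [htr, ← RCLike.ofReal_sum] at this
  rw [eigs_of_isHermitian hpsd.isHermitian]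
  exact RCLike.ofReal_injective (this.symm.trans RCLike.ofReal_one.symm)

theorem kMaxSum_one_le_iff {n : ℕ} [NeZero n] {v : Fin n → ℝ} {c : ℝ} :
    kMaxSum v 1 ≤ c ↔ ∀ i, v i ≤ c := by
  have : Nonempty {s : Finset (Fin n) // s.card = 1} := ⟨⟨{0}, Finset.card_singleton 0⟩⟩
  rw [kMaxSum, ciSup_le_iff (Set.finite_range _).bddAbove]
  constructor
  · intro h i
    simpa using h ⟨{i}, Finset.card_singleton i⟩
  · rintro h ⟨s, hs⟩
    obtain ⟨i, rfl⟩ := Finset.card_eq_one.mp hs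
    simpa using h i

theorem eq_const_inv_of_le_inv {n : ℕ} {p : Fin n → ℝ} (hsum : ∑ i, p i = 1)
    (hle : ∀ i, p i ≤ (n : ℝ)⁻¹) : p = Function.const _ (n : ℝ)⁻¹ := by
  have hn : (n : ℝ) ≠ 0 := by
    rintro h
    obtain rfl : n = 0 := by exact_mod_cast h
    simp at hsum
  have hsum' : ∑ i, p i = ∑ _i : Fin n, (n : ℝ)⁻¹ := by simp [hsum, hn]
  funext i
  exact (Finset.sum_eq_sum_iff_of_le fun i _ => hle i).1 hsum' i (Finset.mem_univ i)

theorem eq_const_inv_of_log_le_sum_negMulLog {n : ℕ} {p : Fin n → ℝ} (hp : 0 ≤ p)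
    (hsum : ∑ i, p i = 1) (hent : Real.log n ≤ ∑ i, Real.negMulLog (p i)) :
    p = Function.const _ (n : ℝ)⁻¹ := by
  have hn : (0 : ℝ) < n := by
    rcases Nat.eq_zero_or_pos n with rfl | h
    · simp at hsum
    · exact_mod_cast h
  have hjensen :
      Real.negMulLog (∑ i, (n : ℝ)⁻¹ • p i) ≤ ∑ i, (n : ℝ)⁻¹ • Real.negMulLog (p i) := by
    have hlog : Real.negMulLog (n : ℝ)⁻¹ = (n : ℝ)⁻¹ * Real.log n := by
      simp [Real.negMulLog, Real.log_inv]
    rw [← Finset.smul_sum, ← Finset.smul_sum, hsum, smul_eq_mul, mul_one, smul_eq_mul, hlog]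
    exact mul_le_mul_of_nonneg_left hent (inv_nonneg.2 hn.le)
  have hconst := Real.strictConcaveOn_negMulLog.eq_of_map_sum_eq (fun _ _ => inv_pos.2 hn)
    (by simp [hn.ne']) (fun i _ => hp i) hjensen
  funext i
  have hsum_i : ∑ j, p j = n * p i := by
    rw [Finset.sum_congr rfl fun j _ => hconst (Finset.mem_univ j) (Finset.mem_univ i)]
    simp
  exact eq_inv_of_mul_eq_one_right (hsum_i ▸ hsum)

noncomputable def maximallyMixed (n : ℕ) : Matrix (Fin n) (Fin n) ℂ :=
  ((n⁻¹ : ℝ) : ℂ) • 1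

theorem posSemidef_maximallyMixed (n : ℕ) : (maximallyMixed n).PosSemidef :=
  PosSemidef.one.smul (by positivity)

theorem isDensityMatrix_maximallyMixed {n : ℕ} (hn : n ≠ 0) :
    IsDensityMatrix (maximallyMixed n) :=
  ⟨posSemidef_maximallyMixed n, by simp [maximallyMixed, hn]⟩

theorem eigs_eq_const_inv_iff {n : ℕ} {A : Matrix (Fin n) (Fin n) ℂ} (hA : A.IsHermitian) :
    eigs A = Function.const _ (n⁻¹ : ℝ) ↔ A = maximallyMixed n := by
  rw [eigs_of_isHermitian hA, hA.eigenvalues_eq_const_iff]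
  rfl

theorem eigs_maximallyMixed (n : ℕ) : eigs (maximallyMixed n) = Function.const _ (n⁻¹ : ℝ) :=
  (eigs_eq_const_inv_iff (posSemidef_maximallyMixed n).isHermitian).2 rfl

section PositiveMap

variable {n : ℕ} {Φ : Matrix (Fin n) (Fin n) ℂ →ₗ[ℂ] Matrix (Fin n) (Fin n) ℂ}

theorem IsDensityMatrix.map (hpos : IsPositiveMap Φ) (htp : IsTracePreserving Φ)
    {ρ : Matrix (Fin n) (Fin n) ℂ} (hρ : IsDensityMatrix ρ) : IsDensityMatrix (Φ ρ) :=
  ⟨hpos ρ hρ.1, (htp ρ).trans hρ.2⟩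

theorem kMaxSum_eigs_map_le (hpos : IsPositiveMap Φ) (htp : IsTracePreserving Φ)
    (hunital : Φ 1 = 1) {ρ : Matrix (Fin n) (Fin n) ℂ} (hρ : ρ.PosSemidef) (k : ℕ) :
    kMaxSum (eigs (Φ ρ)) k ≤ kMaxSum (eigs ρ) k := by
  obtain ⟨B, hB, heq⟩ := exists_mem_doublyStochastic_eigs_map_eq hpos htp hunital hρ
  rw [heq]
  exact kMaxSum_mulVec_le hB _ k

theorem vnEntropy_le_vnEntropy_map (hpos : IsPositiveMap Φ) (htp : IsTracePreserving Φ)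
    (hunital : Φ 1 = 1) {ρ : Matrix (Fin n) (Fin n) ℂ} (hρ : ρ.PosSemidef) :
    vnEntropy ρ ≤ vnEntropy (Φ ρ) := by
  obtain ⟨B, hB, heq⟩ := exists_mem_doublyStochastic_eigs_map_eq hpos htp hunital hρ
  rw [vnEntropy_eq_sum_negMulLog, vnEntropy_eq_sum_negMulLog, heq]
  exact sum_negMulLog_le_sum_negMulLog_mulVec hB (eigs_nonneg_of_posSemidef hρ)

theorem map_one_eq_one_of_map_maximallyMixed (hn : n ≠ 0)
    (h : Φ (maximallyMixed n) = maximallyMixed n) : Φ 1 = 1 := by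
  rw [maximallyMixed, map_smul] at h
  exact smul_right_injective _ (by simpa using hn) h

theorem map_one_eq_one_of_kMaxSum_le (hn : n ≠ 0) (hpos : IsPositiveMap Φ)
    (htp : IsTracePreserving Φ)
    (h : kMaxSum (eigs (Φ (maximallyMixed n))) 1 ≤ kMaxSum (eigs (maximallyMixed n)) 1) :
    Φ 1 = 1 := by
  have : NeZero n := ⟨hn⟩
  have hσ := (isDensityMatrix_maximallyMixed hn).map hpos htp
  have hle : ∀ i, eigs (Φ (maximallyMixed n)) i ≤ (n⁻¹ : ℝ) :=
    kMaxSum_one_le_iff.1 (h.trans (kMaxSum_one_le_iff.2 fun _ => by simp [eigs_maximallyMixed]))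
  refine map_one_eq_one_of_map_maximallyMixed hn ((eigs_eq_const_inv_iff hσ.1.isHermitian).1 ?_)
  exact eq_const_inv_of_le_inv hσ.sum_eigs hle

theorem map_one_eq_one_of_vnEntropy_le (hn : n ≠ 0) (hpos : IsPositiveMap Φ)
    (htp : IsTracePreserving Φ)
    (h : vnEntropy (maximallyMixed n) ≤ vnEntropy (Φ (maximallyMixed n))) : Φ 1 = 1 := by
  have hσ := (isDensityMatrix_maximallyMixed hn).map hpos htp
  have hlog : vnEntropy (maximallyMixed n) = Real.log n := by
    simp [vnEntropy_eq_sum_negMulLog, eigs_maximallyMixed, Real.negMulLog, hn]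
  rw [hlog, vnEntropy_eq_sum_negMulLog] at h
  refine map_one_eq_one_of_map_maximallyMixed hn ((eigs_eq_const_inv_iff hσ.1.isHermitian).1 ?_)
  exact eq_const_inv_of_log_le_sum_negMulLog (eigs_nonneg_of_posSemidef hσ.1) hσ.sum_eigs h

end PositiveMap

/-- For a generator `L` whose semigroup `exp(t • L)` consists of positive
trace-preserving maps, the following are equivalent: (1) the semigroup is unital;
(2) eigenvalue majorization `exp(t • L) ρ ≺ ρ` for all density matrices and `t ≥ 0`;
(3) the von Neumann entropy is not decreased; (4) `L 1 = 0`. -/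
theorem tfae_unital_majorization_entropy_generator {n : ℕ} (hn : 1 ≤ n)
    (L : Matrix (Fin n) (Fin n) ℂ →ₗ[ℂ] Matrix (Fin n) (Fin n) ℂ)
    (hptp : ∀ t : ℝ, 0 ≤ t →
      IsPositiveMap (expEnd (t • L)) ∧ IsTracePreserving (expEnd (t • L))) :
    List.TFAE
      [∀ t : ℝ, 0 ≤ t → expEnd (t • L) 1 = 1,
       ∀ t : ℝ, 0 ≤ t → ∀ ρ : Matrix (Fin n) (Fin n) ℂ, IsDensityMatrix ρ →
         ∀ k : ℕ, 1 ≤ k → k ≤ n →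
           kMaxSum (eigs (expEnd (t • L) ρ)) k ≤ kMaxSum (eigs ρ) k,
       ∀ t : ℝ, 0 ≤ t → ∀ ρ : Matrix (Fin n) (Fin n) ℂ, IsDensityMatrix ρ →
         vnEntropy ρ ≤ vnEntropy (expEnd (t • L) ρ),
       L 1 = 0] := by
  have hn0 : n ≠ 0 := Nat.one_le_iff_ne_zero.mp hn
  tfae_have 1 ↔ 4 := expEnd_smul_apply_eq_self_iff L 1
  tfae_have 1 → 2 := fun h1 t ht ρ hρ k _ _ =>
    kMaxSum_eigs_map_le (hptp t ht).1 (hptp t ht).2 (h1 t ht) hρ.1 k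
  tfae_have 1 → 3 := fun h1 t ht ρ hρ =>
    vnEntropy_le_vnEntropy_map (hptp t ht).1 (hptp t ht).2 (h1 t ht) hρ.1
  tfae_have 2 → 1 := fun h2 t ht =>
    map_one_eq_one_of_kMaxSum_le hn0 (hptp t ht).1 (hptp t ht).2
      (h2 t ht _ (isDensityMatrix_maximallyMixed hn0) 1 le_rfl hn)
  tfae_have 3 → 1 := fun h3 t ht =>
    map_one_eq_one_of_vnEntropy_le hn0 (hptp t ht).1 (hptp t ht).2
      (h3 t ht _ (isDensityMatrix_maximallyMixed hn0))
  tfae_finish
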